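/- arXiv:1606.02077 — 4 statements merged into one kernel-verified Lean document; each statement's English description precedes it below -/
import Mathlib

section
/- Let Ψ(FP, FN) = (c₁·FP + d₁·FN + e₁)/(c₂·FP + d₂·FN + e₂) be a linear-fractional function of false positive rate FP and false negative rate FN, where the denominator is bounded below by γ > 0 over the feasible region. Let (FP*, FN*) achieve the maximum value Ψ*. Assume Ψ*·c₂ - c₁ ≥ 0 and Ψ*·d₂ - d₁ ≥ 0, not both zero. Set α = (Ψ*·c₂ - c₁)/((Ψ*·c₂ - c₁) + (Ψ*·d₂ - d₁)) and C = ((Ψ*·c₂ - c₁) + (Ψ*·d₂ - d₁))/γ. Then for any feasible (FP, FN): Ψ* - Ψ(FP, FN) ≤ C·[(α·FP + (1-α)·FN) - (α·FP* + (1-α)·FN*)]. -/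
/-- Regret of a linear-fractional metric is bounded by a weighted 0-1 risk regret. -/
theorem linear_fractional_regret_bound
    (c₁ c₂ d₁ d₂ e₁ e₂ γ : ℝ) (hγ : 0 < γ)
    (S : Set (ℝ × ℝ))
    (hpos : ∀ p ∈ S, 0 ≤ p.1 ∧ 0 ≤ p.2)
    (hden : ∀ p ∈ S, γ ≤ c₂ * p.1 + d₂ * p.2 + e₂)
    (Ψ : ℝ × ℝ → ℝ)
    (hΨ : ∀ p, Ψ p = (c₁ * p.1 + d₁ * p.2 + e₁) / (c₂ * p.1 + d₂ * p.2 + e₂))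
    (pstar : ℝ × ℝ) (hpstar : pstar ∈ S)
    (hmax : ∀ p ∈ S, Ψ p ≤ Ψ pstar)
    (h1 : 0 ≤ Ψ pstar * c₂ - c₁) (h2 : 0 ≤ Ψ pstar * d₂ - d₁)
    (hnz : 0 < (Ψ pstar * c₂ - c₁) + (Ψ pstar * d₂ - d₁))
    (α C : ℝ)
    (hα : α = (Ψ pstar * c₂ - c₁) / ((Ψ pstar * c₂ - c₁) + (Ψ pstar * d₂ - d₁)))
    (hC : C = ((Ψ pstar * c₂ - c₁) + (Ψ pstar * d₂ - d₁)) / γ) :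
    ∀ p ∈ S,
      Ψ pstar - Ψ p ≤
        C * ((α * p.1 + (1 - α) * p.2) - (α * pstar.1 + (1 - α) * pstar.2)) := by
  intro p hp
  set A := Ψ pstar * c₂ - c₁ with hA
  set B := Ψ pstar * d₂ - d₁ with hB
  have hDp : γ ≤ c₂ * p.1 + d₂ * p.2 + e₂ := hden p hp
  have hDs : γ ≤ c₂ * pstar.1 + d₂ * pstar.2 + e₂ := hden pstar hpstar
  have hDp0 : 0 < c₂ * p.1 + d₂ * p.2 + e₂ := lt_of_lt_of_le hγ hDp
  have hDs0 : 0 < c₂ * pstar.1 + d₂ * pstar.2 + e₂ := lt_of_lt_of_le hγ hDs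
  -- Ψ* * Ds = numerator at pstar
  have hstar : Ψ pstar * (c₂ * pstar.1 + d₂ * pstar.2 + e₂)
      = c₁ * pstar.1 + d₁ * pstar.2 + e₁ := by
    rw [hΨ pstar]
    rw [div_mul_cancel₀ _ hDs0.ne']
  -- regret as a quotient
  have hreg : Ψ pstar - Ψ p
      = (A * (p.1 - pstar.1) + B * (p.2 - pstar.2)) / (c₂ * p.1 + d₂ * p.2 + e₂) := by
    rw [hΨ p, hA, hB]
    rw [eq_div_iff hDp0.ne', sub_mul, div_mul_cancel₀ _ hDp0.ne']
    nlinarith [hstar]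
  have hnum : 0 ≤ A * (p.1 - pstar.1) + B * (p.2 - pstar.2) := by
    have hle : Ψ p ≤ Ψ pstar := hmax p hp
    have h := hreg
    rw [eq_div_iff hDp0.ne'] at h
    rw [← h]
    exact mul_nonneg (sub_nonneg.mpr hle) hDp0.le
  have hRHS : C * ((α * p.1 + (1 - α) * p.2) - (α * pstar.1 + (1 - α) * pstar.2))
      = (A * (p.1 - pstar.1) + B * (p.2 - pstar.2)) / γ := by
    rw [hC, hα]
    field_simp
    ring
  rw [hreg, hRHS]
  exact div_le_div_of_nonneg_left hnum hγ hDp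
end

section
/- Let ℓ(t, y) = log(1 + exp(-(2y-1)·t)) be the logistic loss for y ∈ {0,1}, and for η ∈ [0,1], t ∈ ℝ define the conditional ℓ-risk L_ℓ(η, t) = η·ℓ(t,1) + (1-η)·ℓ(t,0). Then L_ℓ(η, ·) is minimized at t* = log(η/(1-η)) (for η ∈ (0,1)), and the conditional regret satisfies L_ℓ(η, t) - L_ℓ(η, t*) ≥ 2·(η - σ(t))², where σ(t) = 1/(1+exp(-t)) is the sigmoid function; i.e., the logistic loss is 4-strongly proper. -/
open Real

private noncomputable def Fbin (η p : ℝ) : ℝ :=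
  η * (Real.log η - Real.log p) + (1 - η) * (Real.log (1 - η) - Real.log (1 - p))
    - 2 * (η - p) ^ 2

private lemma Fbin_hasDerivAt (η p : ℝ) (hp0 : p ≠ 0) (hp1 : p ≠ 1) :
    HasDerivAt (Fbin η) (-η / p + (1 - η) / (1 - p) + 4 * (η - p)) p := by
  have h1 : HasDerivAt Real.log (1 / p) p := by
    simpa [one_div] using Real.hasDerivAt_log hp0
  have hlin : HasDerivAt (fun x : ℝ => 1 - x) (-1) p := by
    simpa [Pi.sub_def] using (hasDerivAt_const p (1:ℝ)).sub (hasDerivAt_id p)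
  have h2 : HasDerivAt (fun x : ℝ => Real.log (1 - x)) ((1 / (1 - p)) * (-1)) p := by
    have hl : HasDerivAt Real.log (1 / (1 - p)) (1 - p) := by
      simpa [one_div] using Real.hasDerivAt_log (sub_ne_zero.2 (Ne.symm hp1))
    exact hl.comp p hlin
  have h3 : HasDerivAt (fun x : ℝ => (η - x) ^ 2) ((2 : ℕ) * (η - p) ^ 1 * (-1)) p := by
    have : HasDerivAt (fun x : ℝ => η - x) (-1) p := by
      simpa [Pi.sub_def] using (hasDerivAt_const p η).sub (hasDerivAt_id p)
    exact this.pow 2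
  have H := ((((hasDerivAt_const p (Real.log η)).sub h1).const_mul η).add
      (((hasDerivAt_const p (Real.log (1 - η))).sub h2).const_mul (1 - η))).sub
      (h3.const_mul 2)
  have hval : -η / p + (1 - η) / (1 - p) + 4 * (η - p)
      = η * (0 - 1 / p) + (1 - η) * (0 - 1 / (1 - p) * -1) - 2 * (↑(2:ℕ) * (η - p) ^ 1 * -1) := by
    push_cast
    field_simp
    ring
  rw [hval]
  exact H

private lemma pinsker_bin (η p : ℝ) (hη : η ∈ Set.Ioo (0:ℝ) 1) (hp : p ∈ Set.Ioo (0:ℝ) 1) :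
    2 * (η - p) ^ 2 ≤
      η * (Real.log η - Real.log p) + (1 - η) * (Real.log (1 - η) - Real.log (1 - p)) := by
  obtain ⟨hη0, hη1⟩ := hη
  obtain ⟨hp0, hp1⟩ := hp
  have hF0 : Fbin η η = 0 := by simp [Fbin]
  have key : 0 ≤ Fbin η p := by
    have hderiv : ∀ x ∈ Set.Ioo (0:ℝ) 1,
        HasDerivAt (Fbin η) ((x - η) * (1 - 2*x)^2 / (x * (1 - x))) x := by
      intro x hx
      have h := Fbin_hasDerivAt η x (ne_of_gt hx.1) (ne_of_lt hx.2)
      have heq : -η / x + (1 - η) / (1 - x) + 4 * (η - x)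
          = (x - η) * (1 - 2*x)^2 / (x * (1 - x)) := by
        have hx0 : x ≠ 0 := ne_of_gt hx.1
        have hx1 : (1 : ℝ) - x ≠ 0 := sub_ne_zero.2 (ne_of_lt hx.2).symm
        field_simp
        ring
      rwa [heq] at h
    have hcont : ∀ s ⊆ Set.Ioo (0:ℝ) 1, ContinuousOn (Fbin η) s := by
      intro s hs
      intro x hx
      exact ((hderiv x (hs hx)).continuousAt).continuousWithinAt
    rcases le_or_gt η p with hle | hlt
    · -- monotone on [η, p] ⊆ Ioo 0 1
      have hsub : Set.Icc η p ⊆ Set.Ioo (0:ℝ) 1 := fun x hx =>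
        ⟨lt_of_lt_of_le hη0 hx.1, lt_of_le_of_lt hx.2 hp1⟩
      have hmono : MonotoneOn (Fbin η) (Set.Icc η p) := by
        apply monotoneOn_of_deriv_nonneg (convex_Icc η p) (hcont _ hsub)
        · intro x hx
          rw [interior_Icc] at hx
          exact ((hderiv x (hsub (Set.mem_Icc_of_Ioo hx))).differentiableAt).differentiableWithinAt
        · intro x hx
          rw [interior_Icc] at hx
          have hx' := hsub (Set.mem_Icc_of_Ioo hx)
          rw [(hderiv x hx').deriv]
          apply div_nonneg
          · apply mul_nonneg (by linarith [hx.1]) (sq_nonneg _)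
          · have := hx'.1; have := hx'.2; nlinarith
      have := hmono (Set.left_mem_Icc.2 hle) (Set.right_mem_Icc.2 hle) hle
      linarith [hF0 ▸ this]
    · -- antitone on [p, η]
      have hsub : Set.Icc p η ⊆ Set.Ioo (0:ℝ) 1 := fun x hx =>
        ⟨lt_of_lt_of_le hp0 hx.1, lt_of_le_of_lt hx.2 hη1⟩
      have hanti : AntitoneOn (Fbin η) (Set.Icc p η) := by
        apply antitoneOn_of_deriv_nonpos (convex_Icc p η) (hcont _ hsub)
        · intro x hx
          rw [interior_Icc] at hx
          exact ((hderiv x (hsub (Set.mem_Icc_of_Ioo hx))).differentiableAt).differentiableWithinAt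
        · intro x hx
          rw [interior_Icc] at hx
          have hx' := hsub (Set.mem_Icc_of_Ioo hx)
          rw [(hderiv x hx').deriv]
          apply div_nonpos_of_nonpos_of_nonneg
          · apply mul_nonpos_of_nonpos_of_nonneg (by linarith [hx.2]) (sq_nonneg _)
          · have := hx'.1; have := hx'.2; nlinarith
      have := hanti (Set.left_mem_Icc.2 hlt.le) (Set.right_mem_Icc.2 hlt.le) hlt.le
      linarith [hF0 ▸ this]
  simp only [Fbin] at key
  linarith

/-- The logistic loss is 4-strongly proper: its conditional risk is minimized at
the logit `log(η/(1-η))`, and the conditional regret is at least `2(η - σ(t))²`. -/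
theorem logistic_loss_strongly_proper
    (η : ℝ) (hη : η ∈ Set.Ioo (0:ℝ) 1)
    (ℓ : ℝ → ℝ → ℝ)
    (hℓ : ∀ t y : ℝ, ℓ t y = Real.log (1 + Real.exp (-(2 * y - 1) * t)))
    (Lℓ : ℝ → ℝ) (hLℓ : ∀ t, Lℓ t = η * ℓ t 1 + (1 - η) * ℓ t 0)
    (tstar : ℝ) (htstar : tstar = Real.log (η / (1 - η))) :
    (∀ t : ℝ, Lℓ tstar ≤ Lℓ t) ∧
    (∀ t : ℝ, 2 * (η - 1 / (1 + Real.exp (-t))) ^ 2 ≤ Lℓ t - Lℓ tstar) := by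
  obtain ⟨hη0, hη1⟩ := hη
  have hη1' : (0:ℝ) < 1 - η := by linarith
  -- exp tstar = η / (1-η)
  have hexp : Real.exp tstar = η / (1 - η) := by
    rw [htstar, Real.exp_log (div_pos hη0 hη1')]
  have hexpneg : Real.exp (-tstar) = (1 - η) / η := by
    rw [Real.exp_neg, hexp, inv_div]
  -- Lℓ tstar = -(η log η + (1-η) log (1-η))
  have hLstar : Lℓ tstar = -(η * Real.log η + (1 - η) * Real.log (1 - η)) := by
    rw [hLℓ, hℓ, hℓ]
    have e1 : -(2 * (1:ℝ) - 1) * tstar = -tstar := by ring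
    have e0 : -(2 * (0:ℝ) - 1) * tstar = tstar := by ring
    rw [e1, e0, hexpneg, hexp]
    have h1 : (1 : ℝ) + (1 - η) / η = 1 / η := by field_simp; ring
    have h2 : (1 : ℝ) + η / (1 - η) = 1 / (1 - η) := by field_simp; ring
    rw [h1, h2, one_div, one_div, Real.log_inv, Real.log_inv]
    ring
  have main : ∀ t : ℝ, 2 * (η - 1 / (1 + Real.exp (-t))) ^ 2 ≤ Lℓ t - Lℓ tstar := by
    intro t
    set p : ℝ := 1 / (1 + Real.exp (-t)) with hpdef
    have hexppos : (0:ℝ) < Real.exp (-t) := Real.exp_pos _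
    have hden : (0:ℝ) < 1 + Real.exp (-t) := by linarith
    have hp0 : 0 < p := by positivity
    have hp1 : p < 1 := by
      rw [hpdef, div_lt_one hden]; linarith
    have h1p : 1 - p = 1 / (1 + Real.exp t) := by
      rw [hpdef]
      rw [Real.exp_neg]
      have := (Real.exp_pos t).ne'
      field_simp
      ring
    -- Lℓ t = -(η log p + (1-η) log (1-p))
    have hLt : Lℓ t = -(η * Real.log p + (1 - η) * Real.log (1 - p)) := by
      rw [hLℓ, hℓ, hℓ]
      have e1 : -(2 * (1:ℝ) - 1) * t = -t := by ring
      have e0 : -(2 * (0:ℝ) - 1) * t = t := by ring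
      rw [e1, e0, h1p, hpdef, one_div, one_div, Real.log_inv, Real.log_inv]
      ring
    have hpin := pinsker_bin η p ⟨hη0, hη1⟩ ⟨hp0, hp1⟩
    rw [hLt, hLstar]
    calc 2 * (η - p) ^ 2
        ≤ η * (Real.log η - Real.log p) + (1 - η) * (Real.log (1 - η) - Real.log (1 - p)) :=
          hpin
      _ = -(η * Real.log p + (1 - η) * Real.log (1 - p))
            - -(η * Real.log η + (1 - η) * Real.log (1 - η)) := by ring
  refine ⟨fun t => ?_, main⟩
  have := main t
  nlinarith [sq_nonneg (η - 1 / (1 + Real.exp (-t)))]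
end

section
/- Let ℓ be a λ-strongly proper loss with link function ξ, meaning for all η ∈ [0,1] and t ∈ ℝ, the conditional regret satisfies Reg_ℓ(η, t) ≥ (λ/2)·(η - ξ⁻¹(t))². Fix α ∈ (0,1), set θ* = ξ(α), and let ŷ = [t ≥ θ*]. Then the conditional weighted 0-1 regret satisfies Reg_α(η, ŷ) ≤ |η - α|·[ŷ ≠ [η > α]] ≤ √(2/λ)·√(Reg_ℓ(η, t)). -/
/-- Thresholding the real-valued prediction of a λ-strongly proper loss at
`θ* = ξ(α)` makes the weighted 0-1 regret at most `√(2/λ)·√(ℓ-regret)`. -/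
theorem thresholded_regret_bound
    (lam : ℝ) (hlam : 0 < lam)
    (η α : ℝ) (hη : η ∈ Set.Icc (0:ℝ) 1) (hα : α ∈ Set.Ioo (0:ℝ) 1)
    (ξ ξinv : ℝ → ℝ)
    (hmono : Monotone ξinv)
    (hinv : ∀ p ∈ Set.Ioo (0:ℝ) 1, ξinv (ξ p) = p)
    (Regℓ : ℝ → ℝ → ℝ)
    (hproper : ∀ η' ∈ Set.Icc (0:ℝ) 1, ∀ t : ℝ,
      (lam / 2) * (η' - ξinv t) ^ 2 ≤ Regℓ η' t)
    (t : ℝ) (yhat : Bool) (hyhat : yhat = decide (ξ α ≤ t))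
    (Lα : Bool → ℝ)
    (hL : ∀ b : Bool, Lα b = α * (1 - η) * (if b then 1 else 0)
                              + (1 - α) * η * (if b then 0 else 1)) :
    Lα yhat - min (Lα true) (Lα false)
        ≤ |η - α| * (if yhat ≠ decide (α < η) then 1 else 0) ∧
    |η - α| * (if yhat ≠ decide (α < η) then 1 else 0)
        ≤ Real.sqrt (2 / lam) * Real.sqrt (Regℓ η t) := by
  obtain ⟨hη0, hη1⟩ := hη
  obtain ⟨hα0, hα1⟩ := hα
  have hinvα : ξinv (ξ α) = α := hinv α ⟨hα0, hα1⟩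
  have ht := hproper η ⟨hη0, hη1⟩ t
  have hreg : 0 ≤ Regℓ η t := le_trans (by positivity) ht
  have hLt : Lα true = α * (1 - η) := by rw [hL true]; norm_num
  have hLf : Lα false = (1 - α) * η := by rw [hL false]; norm_num
  by_cases hcase : yhat = decide (α < η)
  · have hind : (if yhat ≠ decide (α < η) then (1:ℝ) else 0) = 0 := by simp [hcase]
    rw [hind, mul_zero]
    refine ⟨?_, by positivity⟩
    by_cases hb : α < η
    · have hy : yhat = true := by rw [hcase]; simp [hb]
      have h1 : Lα true ≤ Lα false := by rw [hLt, hLf]; nlinarith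
      rw [hy, min_eq_left h1]; linarith
    · have hy : yhat = false := by rw [hcase]; simp [hb]
      have h1 : Lα false ≤ Lα true := by
        rw [hLt, hLf]; push_neg at hb; nlinarith
      rw [hy, min_eq_right h1]; linarith
  · have hind : (if yhat ≠ decide (α < η) then (1:ℝ) else 0) = 1 := by simp [hcase]
    rw [hind, mul_one]
    have hkey : |η - α| ≤ |η - ξinv t| := by
      by_cases hb : α < η
      · have hy : yhat = false := by
          cases hyb : yhat
          · rfl
          · exact absurd (by rw [hyb]; simp [hb]) hcase
        have htlt : ¬ (ξ α ≤ t) := by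
          intro h; rw [hy] at hyhat; simp [h] at hyhat
        push_neg at htlt
        have : ξinv t ≤ α := by
          calc ξinv t ≤ ξinv (ξ α) := hmono htlt.le
          _ = α := hinvα
        rw [abs_of_nonneg (by linarith), abs_of_nonneg (by linarith)]; linarith
      · push_neg at hb
        have hy : yhat = true := by
          cases hyb : yhat
          · exact absurd (by rw [hyb]; simp [hb.not_gt]) hcase
          · rfl
        have htge : ξ α ≤ t := by
          by_contra h; rw [hy] at hyhat; simp [h] at hyhat
        have : α ≤ ξinv t := by
          calc α = ξinv (ξ α) := hinvα.symm
          _ ≤ ξinv t := hmono htge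
        rw [abs_of_nonpos (by linarith), abs_of_nonpos (by linarith)]; linarith
    constructor
    · by_cases hb : α < η
      · have hy : yhat = false := by
          cases hyb : yhat
          · rfl
          · exact absurd (by rw [hyb]; simp [hb]) hcase
        have h1 : Lα true ≤ Lα false := by rw [hLt, hLf]; nlinarith
        rw [hy, min_eq_left h1, abs_of_nonneg (by linarith), hLt, hLf]; linarith
      · push_neg at hb
        have hy : yhat = true := by
          cases hyb : yhat
          · exact absurd (by rw [hyb]; simp [hb.not_gt]) hcase
          · rfl
        have h1 : Lα false ≤ Lα true := by rw [hLt, hLf]; nlinarith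
        rw [hy, min_eq_right h1, abs_of_nonpos (by linarith), hLt, hLf]; linarith
    · have hsq : (η - α) ^ 2 ≤ (η - ξinv t) ^ 2 := by
        rw [← sq_abs (η - α), ← sq_abs (η - ξinv t)]
        exact pow_le_pow_left₀ (abs_nonneg _) hkey 2
      have h3 : (η - α) ^ 2 ≤ (2 / lam) * Regℓ η t := by
        have h4 := mul_le_mul_of_nonneg_left ht (le_of_lt (by positivity : (0:ℝ) < 2 / lam))
        have h5 : (2 / lam) * ((lam / 2) * (η - ξinv t) ^ 2) = (η - ξinv t) ^ 2 := by
          field_simp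
        linarith [h4, h5 ▸ h4]
      calc |η - α| = Real.sqrt ((η - α) ^ 2) := (Real.sqrt_sq_eq_abs _).symm
      _ ≤ Real.sqrt ((2 / lam) * Regℓ η t) := Real.sqrt_le_sqrt h3
      _ = Real.sqrt (2 / lam) * Real.sqrt (Regℓ η t) := Real.sqrt_mul (by positivity) _
end

section
/- Let Φ : ℝ^{d×L} → ℝ be a convex differentiable function of the form Φ(W) = φ(X·W) for a convex differentiable φ, and let λ > 0. Suppose Ŵ minimizes W ↦ Φ(W) + λ·‖W‖_* and W* satisfies 2·‖Xᵀ·∇φ(X·W*)‖₂ ≤ λ. Then the Bregman divergence of Φ satisfies Φ(Ŵ) - Φ(W*) - ⟨Xᵀ∇φ(XW*), Ŵ - W*⟩ ≤ λ·(‖W*‖_* - ‖Ŵ‖_*) + (λ/2)·‖Ŵ - W*‖_*. -/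
open Matrix

/-- Nuclear norm of a real matrix: sum of the singular values. -/
noncomputable def nuclearNorm {d L : ℕ} (M : Matrix (Fin d) (Fin L) ℝ) : ℝ :=
  ∑ i, Real.sqrt ((Matrix.isHermitian_conjTranspose_mul_self M).eigenvalues i)

/-- Operator norm of a real matrix: largest singular value. -/
noncomputable def opNorm {d L : ℕ} (M : Matrix (Fin d) (Fin L) ℝ) : ℝ :=
  ⨆ i, Real.sqrt ((Matrix.isHermitian_conjTranspose_mul_self M).eigenvalues i)

/-- Cauchy-Schwarz for dot products of real vectors, absolute-value form. -/
lemma abs_dotProduct_le {k : ℕ} (u w : Fin k → ℝ) :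
    |u ⬝ᵥ w| ≤ Real.sqrt (u ⬝ᵥ u) * Real.sqrt (w ⬝ᵥ w) := by
  have h := Finset.sum_mul_sq_le_sq_mul_sq Finset.univ u w
  calc |u ⬝ᵥ w| = Real.sqrt ((u ⬝ᵥ w) ^ 2) := (Real.sqrt_sq_eq_abs _).symm
    _ ≤ Real.sqrt ((∑ i, u i ^ 2) * ∑ i, w i ^ 2) := Real.sqrt_le_sqrt h
    _ = Real.sqrt (u ⬝ᵥ u) * Real.sqrt (w ⬝ᵥ w) := by
        rw [Real.sqrt_mul (by positivity)]
        simp [dotProduct, pow_two]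

/-- Diagonal entries of `star V * M * V` as a quadratic form. -/
lemma star_mul_mul_apply {L : ℕ} (M V : Matrix (Fin L) (Fin L) ℝ) (i : Fin L) :
    (star V * M * V) i i = (fun p => V p i) ⬝ᵥ (M *ᵥ fun p => V p i) := by
  simp only [mul_apply, dotProduct, mulVec, Finset.mul_sum, Finset.sum_mul,
    Matrix.star_apply, star_trivial]
  rw [Finset.sum_comm]
  apply Finset.sum_congr rfl; intro p _
  apply Finset.sum_congr rfl; intro q _
  ring

lemma dot_self_eq_quad {d L : ℕ} (A : Matrix (Fin d) (Fin L) ℝ) (v : Fin L → ℝ) :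
    (A *ᵥ v) ⬝ᵥ (A *ᵥ v) = v ⬝ᵥ ((Aᴴ * A) *ᵥ v) := by
  rw [show (Aᴴ : Matrix (Fin L) (Fin d) ℝ) = Aᵀ from by
    simp [conjTranspose, Matrix.map, transpose]]
  rw [← mulVec_mulVec, Matrix.dotProduct_mulVec v, Matrix.vecMul_transpose]

lemma opNorm_sq_bound {d L : ℕ} (A : Matrix (Fin d) (Fin L) ℝ) (v : Fin L → ℝ)
    (hv : v ⬝ᵥ v = 1) : Real.sqrt ((A *ᵥ v) ⬝ᵥ (A *ᵥ v)) ≤ opNorm A := by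
  have hL : Nonempty (Fin L) := by
    by_contra h
    rw [not_nonempty_iff] at h
    rw [dotProduct, Finset.sum_eq_zero (fun i _ => absurd (h.false i) not_false)] at hv
    exact one_ne_zero hv.symm
  set hA := Matrix.isHermitian_conjTranspose_mul_self A with hhA
  set W : Matrix (Fin L) (Fin L) ℝ := (hA.eigenvectorUnitary : Matrix (Fin L) (Fin L) ℝ) with hW
  have hWmem := (Matrix.IsHermitian.eigenvectorUnitary hA).2
  have hWW : W * star W = 1 := (Matrix.mem_unitaryGroup_iff).mp hWmem
  have hWW' : star W * W = 1 := (Matrix.mem_unitaryGroup_iff').mp hWmem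
  have hspec : Aᴴ * A = W * Matrix.diagonal hA.eigenvalues * star W := by
    have := hA.spectral_theorem
    simp [RCLike.ofReal_real_eq_id] at this
    exact this
  have hbdd : BddAbove (Set.range fun i => Real.sqrt (hA.eigenvalues i)) :=
    (Set.finite_range _).bddAbove
  have hop_nonneg : 0 ≤ opNorm A := by
    obtain ⟨j⟩ := hL
    exact le_trans (Real.sqrt_nonneg (hA.eigenvalues j)) (le_ciSup hbdd j)
  have heig_le : ∀ j, hA.eigenvalues j ≤ opNorm A ^ 2 := by
    intro j
    have h1 : Real.sqrt (hA.eigenvalues j) ≤ opNorm A := le_ciSup hbdd j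
    have h2 : 0 ≤ hA.eigenvalues j := Matrix.eigenvalues_conjTranspose_mul_self_nonneg A j
    calc hA.eigenvalues j = Real.sqrt (hA.eigenvalues j) ^ 2 := (Real.sq_sqrt h2).symm
      _ ≤ opNorm A ^ 2 := by apply pow_le_pow_left₀ (Real.sqrt_nonneg _) h1
  set u : Fin L → ℝ := Wᵀ *ᵥ v with hu
  have hstarW : (star W : Matrix (Fin L) (Fin L) ℝ) = Wᵀ := by
    rw [Matrix.star_eq_conjTranspose, Matrix.conjTranspose_eq_transpose_of_trivial]
  have hdotW : ∀ (x : Fin L → ℝ), v ⬝ᵥ (W *ᵥ x) = u ⬝ᵥ x := by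
    intro x
    rw [Matrix.dotProduct_mulVec v W x, hu, Matrix.mulVec_transpose]
  have huu : u ⬝ᵥ u = 1 := by
    have h1 : u ⬝ᵥ u = v ⬝ᵥ ((Wᵀᴴ * Wᵀ) *ᵥ v) := dot_self_eq_quad Wᵀ v
    rw [Matrix.conjTranspose_eq_transpose_of_trivial, Matrix.transpose_transpose,
      ← hstarW, hWW, Matrix.one_mulVec, hv] at h1
    exact h1
  have hquad : (A *ᵥ v) ⬝ᵥ (A *ᵥ v) = ∑ j, hA.eigenvalues j * u j ^ 2 := by
    rw [dot_self_eq_quad]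
    conv_lhs => rw [hspec]
    rw [← mulVec_mulVec, ← mulVec_mulVec, hdotW, hstarW, ← hu]
    simp only [dotProduct, Matrix.mulVec_diagonal, pow_two]
    apply Finset.sum_congr rfl; intro j _; ring
  have hsum_le : (A *ᵥ v) ⬝ᵥ (A *ᵥ v) ≤ opNorm A ^ 2 := by
    rw [hquad]
    calc ∑ j, hA.eigenvalues j * u j ^ 2 ≤ ∑ j, opNorm A ^ 2 * u j ^ 2 := by
          apply Finset.sum_le_sum
          intro j _
          exact mul_le_mul_of_nonneg_right (heig_le j) (sq_nonneg _)
      _ = opNorm A ^ 2 * (u ⬝ᵥ u) := by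
          rw [← Finset.mul_sum]; congr 1; simp [dotProduct, pow_two]
      _ = opNorm A ^ 2 := by rw [huu, mul_one]
  calc Real.sqrt ((A *ᵥ v) ⬝ᵥ (A *ᵥ v)) ≤ Real.sqrt (opNorm A ^ 2) :=
        Real.sqrt_le_sqrt hsum_le
    _ = opNorm A := by rw [Real.sqrt_sq hop_nonneg]

/-- Duality of the operator and nuclear norms: `|⟨A, B⟩| ≤ ‖A‖₂ ‖B‖_*`. -/
lemma abs_trace_le {d L : ℕ} (A B : Matrix (Fin d) (Fin L) ℝ) :
    |(Aᵀ * B).trace| ≤ opNorm A * nuclearNorm B := by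
  set hB := Matrix.isHermitian_conjTranspose_mul_self B with hhB
  set V : Matrix (Fin L) (Fin L) ℝ := (hB.eigenvectorUnitary : Matrix (Fin L) (Fin L) ℝ) with hV
  have hVmem := (Matrix.IsHermitian.eigenvectorUnitary hB).2
  have hVV : V * star V = 1 := (Matrix.mem_unitaryGroup_iff).mp hVmem
  have hVV' : star V * V = 1 := (Matrix.mem_unitaryGroup_iff').mp hVmem
  have hdiag : star V * (Bᴴ * B) * V = Matrix.diagonal hB.eigenvalues := by
    have := hB.conjStarAlgAut_star_eigenvectorUnitary
    simp [RCLike.ofReal_real_eq_id, Unitary.conjStarAlgAut_apply] at this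
    exact this
  have hAT : (Aᴴ : Matrix (Fin L) (Fin d) ℝ) = Aᵀ := by
    simp [conjTranspose, Matrix.map, transpose]
  have htr : (Aᵀ * B).trace = ∑ i, (star V * (Aᵀ * B) * V) i i := by
    have h1 : (Aᵀ * B).trace = ((Aᵀ * B) * (V * star V)).trace := by rw [hVV, mul_one]
    rw [h1, ← mul_assoc, Matrix.trace_mul_comm]
    rw [← mul_assoc]
    rfl
  rw [htr]
  have hterm : ∀ i, |(star V * (Aᵀ * B) * V) i i| ≤
      opNorm A * Real.sqrt (hB.eigenvalues i) := by
    intro i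
    set v : Fin L → ℝ := fun p => V p i with hv
    have hunit : v ⬝ᵥ v = 1 := by
      have := congrFun (congrFun hVV' i) i
      simp only [Matrix.mul_apply, Matrix.one_apply_eq] at this
      rw [← this]
      simp [dotProduct, hv, Matrix.star_apply]
    have hBv : (B *ᵥ v) ⬝ᵥ (B *ᵥ v) = hB.eigenvalues i := by
      have h1 : (B *ᵥ v) ⬝ᵥ (B *ᵥ v) = (star V * (Bᴴ * B) * V) i i := by
        rw [star_mul_mul_apply, dot_self_eq_quad]
      rw [h1, hdiag, Matrix.diagonal_apply_eq]
    have hentry : (star V * (Aᵀ * B) * V) i i = (A *ᵥ v) ⬝ᵥ (B *ᵥ v) := by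
      rw [star_mul_mul_apply]
      rw [← mulVec_mulVec, Matrix.dotProduct_mulVec v, Matrix.vecMul_transpose]
    rw [hentry]
    calc |(A *ᵥ v) ⬝ᵥ (B *ᵥ v)| ≤
        Real.sqrt ((A *ᵥ v) ⬝ᵥ (A *ᵥ v)) * Real.sqrt ((B *ᵥ v) ⬝ᵥ (B *ᵥ v)) :=
          abs_dotProduct_le _ _
      _ ≤ opNorm A * Real.sqrt (hB.eigenvalues i) := by
          rw [hBv]
          exact mul_le_mul_of_nonneg_right (opNorm_sq_bound A v hunit)
            (Real.sqrt_nonneg _)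
  calc |∑ i, (star V * (Aᵀ * B) * V) i i| ≤ ∑ i, |(star V * (Aᵀ * B) * V) i i| :=
        Finset.abs_sum_le_sum_abs _ _
    _ ≤ ∑ i, opNorm A * Real.sqrt (hB.eigenvalues i) :=
        Finset.sum_le_sum fun i _ => hterm i
    _ = opNorm A * nuclearNorm B := by rw [← Finset.mul_sum]; rfl

lemma nuclearNorm_nonneg {d L : ℕ} (M : Matrix (Fin d) (Fin L) ℝ) :
    0 ≤ nuclearNorm M :=
  Finset.sum_nonneg fun _ _ => Real.sqrt_nonneg _

/-- First step of the estimation-error analysis: if `Ŵ` minimizes the nuclear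
norm regularized objective `W ↦ φ(XW) + λ‖W‖_*`, and
`2‖Xᵀ∇φ(XW*)‖₂ ≤ λ`, then the Bregman divergence of `Φ(W) = φ(XW)` between `Ŵ`
and `W*` is at most `λ(‖W*‖_* - ‖Ŵ‖_*) + (λ/2)‖Ŵ - W*‖_*`. -/
theorem nuclear_regularized_bregman_bound
    {n d L : ℕ} (X : Matrix (Fin n) (Fin d) ℝ)
    (φ : Matrix (Fin n) (Fin L) ℝ → ℝ)
    (lam : ℝ) (hlam : 0 < lam)
    (What Wstar : Matrix (Fin d) (Fin L) ℝ)
    (G : Matrix (Fin n) (Fin L) ℝ)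
    -- `G` is the gradient of the convex differentiable `φ` at `X W*`
    (hgrad : ∀ M : Matrix (Fin n) (Fin L) ℝ,
      φ (X * Wstar) + (Gᵀ * (M - X * Wstar)).trace ≤ φ M)
    (hmin : ∀ W : Matrix (Fin d) (Fin L) ℝ,
      φ (X * What) + lam * nuclearNorm What ≤ φ (X * W) + lam * nuclearNorm W)
    (hlam2 : 2 * opNorm (Xᵀ * G) ≤ lam) :
    φ (X * What) - φ (X * Wstar) - ((Xᵀ * G)ᵀ * (What - Wstar)).trace ≤
      lam * (nuclearNorm Wstar - nuclearNorm What) +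
        (lam / 2) * nuclearNorm (What - Wstar) := by
  have h1 := hmin Wstar
  have h2 := abs_trace_le (Xᵀ * G) (What - Wstar)
  have hnn := nuclearNorm_nonneg (What - Wstar)
  have h3 : opNorm (Xᵀ * G) * nuclearNorm (What - Wstar) ≤
      (lam / 2) * nuclearNorm (What - Wstar) :=
    mul_le_mul_of_nonneg_right (by linarith) hnn
  have h4 : -((Xᵀ * G)ᵀ * (What - Wstar)).trace ≤
      (lam / 2) * nuclearNorm (What - Wstar) :=
    le_trans (neg_le_abs _) (le_trans h2 h3)
  nlinarith [h1, h4]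
end
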